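/- Let n be an integer with n ≡ 3 (mod 4) and n ≥ 3, and let m be an integer with m ≥ 3n + 5. Then for all pairwise distinct integers a, b, c, d ∈ {1, …, m} that all have the same parity (all odd or all even), the product of disjoint transpositions (a, b)(c, d) belongs to C(n, m). -/

import Mathlib

/-
The product `π_{j+1} π_j π_{j+2} π_{j+3}` of four consecutive crossings is the product of the two
disjoint 3-cycles `(j, j+2, j+n+1)` and `(j+1, j+3, j+n+2)`. Two such products whose supports meet
in a single point have a 3-cycle as commutator. Conjugating these 3-cycles by each other and by
the reversal `i ↦ m + 1 - i`, which normalizes `C(n, m)`, gives every 3-cycle `(y, y+2, y+4)`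
inside `{2, …, m - 1}`, and these generate all 3-cycles on each parity class of `{2, …, m - 1}`.
For odd `n`, conjugating one of them by `π_1` gives a 3-cycle through `1`, and reversing it one
through `m`, so `C(n, m)` contains every 3-cycle on a parity class of `{1, …, m}`. Finally
`(a, b)(c, d) = (a, c, b)(a, c, d)`.
-/

/-- The underlying function of the `n`-crossing permutation `π_j` over `{1, …, m}` (as a
function on `ℕ`): it sends `j + k` to `j + n - 1 - k` for `0 ≤ k ≤ n - 1` and fixes all
other points. -/
def crossFun (n j i : ℕ) : ℕ :=
  if j ≤ i ∧ i < j + n then 2 * j + n - 1 - i else i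

lemma crossFun_involutive (n j : ℕ) : Function.Involutive (crossFun n j) := by
  intro i
  unfold crossFun
  split_ifs <;> omega

/-- The `n`-crossing permutation `π_j`, viewed as a permutation of `ℕ` fixing every point
outside `{j, …, j + n - 1}`. -/
def crossPerm (n j : ℕ) : Equiv.Perm ℕ :=
  Function.Involutive.toPerm _ (crossFun_involutive n j)

/-- `C n m` is the subgroup of the symmetric group `S_m` (realized as permutations of `ℕ`
supported on `{1, …, m}`) generated by the `n`-crossing permutations `π_1, …, π_{m-n+1}`. -/
def C (n m : ℕ) : Subgroup (Equiv.Perm ℕ) :=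
  Subgroup.closure {σ | ∃ j, 1 ≤ j ∧ j ≤ m - n + 1 ∧ σ = crossPerm n j}

open Equiv
open scoped commutatorElement

theorem commutatorElement_mul_of_commute {G : Type*} [Group G] {a b g : G} (h : Commute b g) :
    ⁅a * b, g⁆ = ⁅a, g⁆ := by
  rw [commutatorElement_def, commutatorElement_def, mul_inv_rev, mul_assoc a, h.eq]
  group

section ThreeCycles

variable {α : Type*} [DecidableEq α] {x y z : α}

def cycle3 (x y z : α) : Perm α := swap x z * swap x y

theorem cycle3_apply (hxy : x ≠ y) (hxz : x ≠ z) (hyz : y ≠ z) (w : α) :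
    cycle3 x y z w = if w = x then y else if w = y then z else if w = z then x else w := by
  simp only [cycle3, Perm.mul_apply, swap_apply_def]
  split_ifs <;> simp_all

theorem cycle3_apply_left (hxy : x ≠ y) (hyz : y ≠ z) : cycle3 x y z x = y := by
  rw [cycle3, Perm.mul_apply, swap_apply_left, swap_apply_of_ne_of_ne hxy.symm hyz]

theorem cycle3_apply_mid (x y z : α) : cycle3 x y z y = z := by
  rw [cycle3, Perm.mul_apply, swap_apply_right, swap_apply_left]

theorem cycle3_apply_right (hxz : x ≠ z) (hyz : y ≠ z) : cycle3 x y z z = x := by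
  rw [cycle3, Perm.mul_apply, swap_apply_of_ne_of_ne hxz.symm hyz.symm, swap_apply_right]

theorem cycle3_apply_of_ne {w : α} (hx : w ≠ x) (hy : w ≠ y) (hz : w ≠ z) :
    cycle3 x y z w = w := by
  rw [cycle3, Perm.mul_apply, swap_apply_of_ne_of_ne hx hy, swap_apply_of_ne_of_ne hx hz]

theorem cycle3_inv (x y z : α) : (cycle3 x y z)⁻¹ = cycle3 x z y := by
  simp [cycle3, mul_inv_rev]

theorem cycle3_rotate (hxy : x ≠ y) (hxz : x ≠ z) (hyz : y ≠ z) :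
    cycle3 x y z = cycle3 y z x := by
  ext w
  rw [cycle3_apply hxy hxz hyz, cycle3_apply hyz hxy.symm hxz.symm]
  split_ifs <;> simp_all

theorem conj_cycle3 (σ : Perm α) (x y z : α) :
    σ * cycle3 x y z * σ⁻¹ = cycle3 (σ x) (σ y) (σ z) := by
  rw [cycle3, cycle3, swap_apply_apply, swap_apply_apply]
  group

theorem cycle3_mul_cycle3 {w : α} (hxy : x ≠ y) (hxz : x ≠ z) (hyz : y ≠ z) (hwx : w ≠ x)
    (hwy : w ≠ y) (hwz : w ≠ z) : cycle3 x y z * cycle3 w z y = cycle3 x y w := by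
  ext v
  rw [Perm.mul_apply, cycle3_apply hwz hwy hyz.symm, cycle3_apply hxy hwx.symm hwy.symm,
    cycle3_apply hxy hxz hyz]
  split_ifs <;> simp_all

theorem commute_cycle3 {g : Perm α} (hx : g x = x) (hy : g y = y) (hz : g z = z) :
    Commute (cycle3 x y z) g := by
  have h := conj_cycle3 g x y z
  rw [hx, hy, hz] at h
  exact (mul_inv_eq_iff_eq_mul.mp h).symm

theorem commutatorElement_cycle3 {g : Perm α} (hxy : x ≠ y) (hxz : x ≠ z) (hyz : y ≠ z)
    (hgx : g x ≠ x) (hgy : g y = y) (hgz : g z = z) : ⁅cycle3 x y z, g⁆ = cycle3 x y (g x) := by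
  have hy : g x ≠ y := fun h => hxy (g.injective (h.trans hgy.symm))
  have hz : g x ≠ z := fun h => hxz (g.injective (h.trans hgz.symm))
  have h : ⁅cycle3 x y z, g⁆ = cycle3 x y z * (g * cycle3 x y z * g⁻¹)⁻¹ := by
    rw [commutatorElement_def]; group
  rw [h, conj_cycle3, hgy, hgz, cycle3_inv, cycle3_mul_cycle3 hxy hxz hyz hgx hy hz]

theorem swap_mul_swap_eq_cycle3_mul_cycle3 {a b c d : α} (hab : a ≠ b) (hac : a ≠ c) (had : a ≠ d)
    (hbc : b ≠ c) (hbd : b ≠ d) (hcd : c ≠ d) :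
    swap a b * swap c d = cycle3 a c b * cycle3 a c d := by
  ext i
  rw [Perm.mul_apply, Perm.mul_apply, cycle3_apply hac had hcd, cycle3_apply hac hab hbc.symm]
  simp only [swap_apply_def]
  split_ifs <;> simp_all

def ContainsThreeCyclesOn (H : Subgroup (Perm α)) (s : Set α) : Prop :=
  ∀ x ∈ s, ∀ y ∈ s, ∀ z ∈ s, x ≠ y → x ≠ z → y ≠ z → cycle3 x y z ∈ H

namespace ContainsThreeCyclesOn

variable {H : Subgroup (Perm α)} {s : Set α} {a b c : α}

theorem mono {t : Set α} (h : ContainsThreeCyclesOn H t) (hst : s ⊆ t) :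
    ContainsThreeCyclesOn H s :=
  fun x hx y hy z hz => h x (hst hx) y (hst hy) z (hst hz)

theorem pair (a b : α) : ContainsThreeCyclesOn H {a, b} := by
  rintro x (rfl | rfl) y (rfl | rfl) z (rfl | rfl) <;> simp

theorem insert (hs : ContainsThreeCyclesOn H s) (ha : a ∈ s) (hb : b ∈ s) (hab : a ≠ b)
    (habc : cycle3 a b c ∈ H) : ContainsThreeCyclesOn H (insert c s) := by
  by_cases hc : c ∈ s
  · rwa [Set.insert_eq_of_mem hc]
  have hne : ∀ {u}, u ∈ s → u ≠ c := fun hu h => hc (h ▸ hu)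
  have swap_mem : ∀ {u v}, u ∈ s → v ∈ s → u ≠ v → cycle3 u v c ∈ H → cycle3 v u c ∈ H := by
    intro u v hu hv huv h
    rw [cycle3_rotate huv.symm (hne hv) (hne hu), ← cycle3_inv]
    exact H.inv_mem h
  have replace : ∀ {u v w}, u ∈ s → v ∈ s → w ∈ s → u ≠ v → w ≠ u →
      cycle3 u v c ∈ H → cycle3 u w c ∈ H := by
    intro u v w hu hv hw huv hwu h
    by_cases hwv : w = v
    · rwa [hwv]
    have hconj := H.mul_mem (H.mul_mem (hs u hu w hw v hv hwu.symm huv hwv) h)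
      (H.inv_mem (hs u hu w hw v hv hwu.symm huv hwv))
    rw [conj_cycle3, cycle3_apply_left hwu.symm hwv, cycle3_apply_right huv hwv,
      cycle3_apply_of_ne (hne hu).symm (hne hw).symm (hne hv).symm] at hconj
    exact swap_mem hw hu hwu hconj
  -- Every pair of distinct points of `s` is reached from `(a, b)` by swapping the two entries and
  -- by replacing the second one, and both moves preserve `cycle3 u v c ∈ H`.
  have key : ∀ x ∈ s, ∀ y ∈ s, x ≠ y → cycle3 x y c ∈ H := by
    intro x hx y hy hxy
    by_cases hxa : x = a
    · subst hxa
      exact replace hx hb hy hab hxy.symm habc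
    · exact replace hx ha hy hxa (Ne.symm hxy)
        (swap_mem ha hx (Ne.symm hxa) (replace ha hb hx hab hxa habc))
  rintro x hx y hy z hz hxy hxz hyz
  rcases hx with rfl | hx
  · rw [cycle3_rotate hxy hxz hyz]
    exact key y (hy.resolve_left hxy.symm) z (hz.resolve_left hxz.symm) hyz
  rcases hy with rfl | hy
  · rw [cycle3_rotate hxy hxz hyz, cycle3_rotate hyz hxy.symm hxz.symm]
    exact key z (hz.resolve_left hyz.symm) x hx hxz.symm
  rcases hz with rfl | hz
  · exact key x hx y hy hxy
  · exact hs x hx y hy z hz hxy hxz hyz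

theorem triangle (hab : a ≠ b) (hac : a ≠ c) (hbc : b ≠ c) (h : cycle3 a b c ∈ H) :
    ContainsThreeCyclesOn H {a, b, c} :=
  (pair b c).insert (by simp) (by simp) hbc (cycle3_rotate hab hac hbc ▸ h)

theorem image {σ : Perm α} (hσ : ∀ g ∈ H, σ * g * σ⁻¹ ∈ H) (h : ContainsThreeCyclesOn H s) :
    ContainsThreeCyclesOn H (σ '' s) := by
  rintro _ ⟨x, hx, rfl⟩ _ ⟨y, hy, rfl⟩ _ ⟨z, hz, rfl⟩ hxy hxz hyz
  rw [← conj_cycle3]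
  exact hσ _ (h x hx y hy z hz (ne_of_apply_ne σ hxy) (ne_of_apply_ne σ hxz) (ne_of_apply_ne σ hyz))

theorem of_triangles {d e : α} (h₁ : ContainsThreeCyclesOn H {a, b, c})
    (h₂ : ContainsThreeCyclesOn H {c, d, e}) (hnd : [a, b, c, d, e].Nodup) :
    ContainsThreeCyclesOn H {b, c, d} := by
  simp only [List.nodup_cons, List.mem_cons, List.not_mem_nil, List.nodup_nil, not_or,
    ← ne_eq] at hnd
  obtain ⟨⟨hab, hac, had, hae, -⟩, ⟨hbc, hbd, hbe, -⟩, ⟨hcd, hce, -⟩, ⟨hde, -⟩, -⟩ := hnd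
  have habc := h₁ a (by simp) b (by simp) c (by simp) hab hac hbc
  have hτ := H.mul_mem habc (h₂ c (by simp) d (by simp) e (by simp) hcd hce hde)
  -- conjugation by `cycle3 a b c * cycle3 c d e` sends `a, b, c` to `b, c, d`
  have hconj := H.mul_mem (H.mul_mem hτ habc) (H.inv_mem hτ)
  rw [conj_cycle3, Perm.mul_apply, Perm.mul_apply, Perm.mul_apply,
    cycle3_apply_of_ne hac had hae, cycle3_apply_of_ne hbc hbd hbe, cycle3_apply_left hcd hde,
    cycle3_apply_left hab hbc, cycle3_apply_mid,
    cycle3_apply_of_ne had.symm hbd.symm hcd.symm] at hconj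
  exact triangle hbc hbd hcd hconj

end ContainsThreeCyclesOn

end ThreeCycles

theorem ContainsThreeCyclesOn.of_consecutive {H : Subgroup (Perm ℕ)} {lo hi ρ : ℕ}
    (h : ∀ y, lo ≤ y → y + 4 ≤ hi → y % 2 = ρ → cycle3 y (y + 2) (y + 4) ∈ H) :
    ContainsThreeCyclesOn H {t | lo ≤ t ∧ t ≤ hi ∧ t % 2 = ρ} := by
  induction hi with
  | zero =>
    intro x hx y hy z hz hxy
    simp only [Set.mem_ofPred_eq] at hx hy hz
    omega
  | succ k ih =>
    have ih := ih fun y h₁ h₂ h₃ => h y h₁ (by omega) h₃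
    by_cases hk : lo + 4 ≤ k + 1 ∧ (k + 1) % 2 = ρ
    · have hcyc := h (k - 3) (by omega) (by omega) (by omega)
      rw [show k - 3 + 2 = k - 1 by omega, show k - 3 + 4 = k + 1 by omega] at hcyc
      refine (ih.insert (a := k - 3) (b := k - 1) ⟨by omega, by omega, by omega⟩
        ⟨by omega, by omega, by omega⟩ (by omega) hcyc).mono fun t ht => ?_
      simp only [Set.mem_ofPred_eq, Set.mem_insert_iff] at ht ⊢
      omega
    by_cases hp : (k + 1) % 2 = ρ
    · -- the set has at most two elements
      intro x hx y hy z hz hxy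
      simp only [Set.mem_ofPred_eq] at hx hy hz
      omega
    · refine ih.mono fun t ht => ?_
      simp only [Set.mem_ofPred_eq] at ht ⊢
      omega

theorem crossPerm_apply (n j i : ℕ) : crossPerm n j i = crossFun n j i := rfl

theorem crossPerm_mem_C {n m j : ℕ} (hj : 1 ≤ j) (hjm : j + n ≤ m + 1) : crossPerm n j ∈ C n m :=
  Subgroup.subset_closure ⟨j, hj, by omega, rfl⟩

def crossQuad (n j : ℕ) : Perm ℕ :=
  crossPerm n (j + 1) * crossPerm n j * crossPerm n (j + 2) * crossPerm n (j + 3)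

theorem crossQuad_mem_C {n m j : ℕ} (hj : 1 ≤ j) (hjm : j + n + 2 ≤ m) : crossQuad n j ∈ C n m :=
  mul_mem (mul_mem (mul_mem (crossPerm_mem_C (by omega) (by omega))
    (crossPerm_mem_C hj (by omega))) (crossPerm_mem_C (by omega) (by omega)))
    (crossPerm_mem_C (by omega) (by omega))

theorem crossQuad_apply_of_lt {n j i : ℕ} (h : j + n + 2 < i) : crossQuad n j i = i := by
  simp only [crossQuad, Perm.mul_apply, crossPerm_apply, crossFun]
  split_ifs <;> omega

theorem crossQuad_apply_add_add_two {n : ℕ} (hn : 2 ≤ n) (j : ℕ) :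
    crossQuad n j (j + n + 2) = j + 1 := by
  simp only [crossQuad, Perm.mul_apply, crossPerm_apply, crossFun]
  split_ifs <;> omega

theorem crossPerm_succ_mul_crossPerm_apply {n : ℕ} (hn : 0 < n) (j i : ℕ) :
    (crossPerm n (j + 1) * crossPerm n j) i =
      if i = j + n - 1 then j else if i = j + n then j + 1 else
      if j ≤ i ∧ i ≤ j + n then i + 2 else i := by
  simp only [Perm.mul_apply, crossPerm_apply, crossFun]
  split_ifs <;> omega

theorem crossPerm_mul_crossPerm_succ_apply {n : ℕ} (hn : 0 < n) (j i : ℕ) :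
    (crossPerm n j * crossPerm n (j + 1)) i =
      if i = j then j + n - 1 else if i = j + 1 then j + n else
      if j + 2 ≤ i ∧ i ≤ j + n then i - 2 else i := by
  simp only [Perm.mul_apply, crossPerm_apply, crossFun]
  split_ifs <;> omega

theorem crossQuad_eq {n : ℕ} (hn : 3 ≤ n) (j : ℕ) :
    crossQuad n j = cycle3 j (j + 2) (j + n + 1) * cycle3 (j + 1) (j + 3) (j + n + 2) := by
  ext i
  rw [crossQuad, mul_assoc, Perm.mul_apply, crossPerm_succ_mul_crossPerm_apply (by omega),
    crossPerm_mul_crossPerm_succ_apply (by omega), Perm.mul_apply,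
    cycle3_apply (x := j + 1) (y := j + 3) (z := j + n + 2) (by omega) (by omega) (by omega),
    cycle3_apply (x := j) (y := j + 2) (z := j + n + 1) (by omega) (by omega) (by omega)]
  split_ifs <;> omega

def reversal (m : ℕ) : Perm ℕ :=
  Function.Involutive.toPerm (fun i => if 1 ≤ i ∧ i ≤ m then m + 1 - i else i)
    (fun i => by dsimp only; split_ifs <;> omega)

theorem reversal_apply_def (m i : ℕ) :
    reversal m i = if 1 ≤ i ∧ i ≤ m then m + 1 - i else i := rfl

theorem reversal_apply {m i : ℕ} (h₁ : 1 ≤ i) (h₂ : i ≤ m) : reversal m i = m + 1 - i :=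
  if_pos ⟨h₁, h₂⟩

theorem reversal_inv (m : ℕ) : (reversal m)⁻¹ = reversal m :=
  Function.Involutive.toPerm_symm _

theorem reversal_conj_crossPerm {n m j : ℕ} (hj : 1 ≤ j) (hjm : j + n ≤ m + 1) :
    reversal m * crossPerm n j * (reversal m)⁻¹ = crossPerm n (m + 2 - n - j) := by
  ext i
  rw [reversal_inv]
  simp only [Perm.mul_apply, reversal_apply_def, crossPerm_apply, crossFun]
  split_ifs <;> omega

theorem reversal_conj_mem_C {n m : ℕ} (hnm : n ≤ m) {g : Perm ℕ} (hg : g ∈ C n m) :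
    reversal m * g * (reversal m)⁻¹ ∈ C n m := by
  have hle : C n m ≤ (C n m).comap (MulAut.conj (reversal m)).toMonoidHom := by
    refine Subgroup.closure_le _ |>.mpr ?_
    rintro _ ⟨j, hj, hjm, rfl⟩
    show reversal m * crossPerm n j * (reversal m)⁻¹ ∈ C n m
    rw [reversal_conj_crossPerm hj (by omega)]
    exact crossPerm_mem_C (by omega) (by omega)
  exact hle hg

section ThreeCyclesInC

variable {n m : ℕ}

theorem ContainsThreeCyclesOn.reverse (hnm : n ≤ m) {a b c : ℕ}
    (h : ContainsThreeCyclesOn (C n m) {a, b, c}) (ha : 1 ≤ a ∧ a ≤ m) (hb : 1 ≤ b ∧ b ≤ m)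
    (hc : 1 ≤ c ∧ c ≤ m) : ContainsThreeCyclesOn (C n m) {m + 1 - a, m + 1 - b, m + 1 - c} := by
  have := h.image fun g hg => reversal_conj_mem_C hnm hg
  rwa [Set.image_insert_eq, Set.image_insert_eq, Set.image_singleton, reversal_apply ha.1 ha.2,
    reversal_apply hb.1 hb.2, reversal_apply hc.1 hc.2] at this

theorem threeCyclesOn_C_gap_right (hn : 3 ≤ n) {x : ℕ} (hx : 2 ≤ x) (hxm : x + 2 * n + 3 ≤ m) :
    ContainsThreeCyclesOn (C n m) {x, x + n + 1, x + n + 3} := by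
  obtain ⟨r, rfl⟩ : ∃ r, x = r + 1 := ⟨x - 1, by omega⟩
  have hA : crossQuad n (r + n + 2) ∈ C n m := crossQuad_mem_C (by omega) (by omega)
  have hg : crossQuad n r ∈ C n m := crossQuad_mem_C (by omega) (by omega)
  have hmem : ⁅crossQuad n (r + n + 2), crossQuad n r⁆ ∈ C n m := by
    rw [commutatorElement_def]
    exact mul_mem (mul_mem (mul_mem hA hg) (inv_mem hA)) (inv_mem hg)
  -- Of the two 3-cycles of `crossQuad n (r + n + 2)`, only the first meets the support of
  -- `crossQuad n r`, and only in the point `r + n + 2`.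
  rw [crossQuad_eq hn (r + n + 2),
    commutatorElement_mul_of_commute (commute_cycle3 (crossQuad_apply_of_lt (by omega))
      (crossQuad_apply_of_lt (by omega)) (crossQuad_apply_of_lt (by omega))),
    commutatorElement_cycle3 (by omega) (by omega) (by omega)
      (by rw [crossQuad_apply_add_add_two (by omega) r]; omega)
      (crossQuad_apply_of_lt (by omega)) (crossQuad_apply_of_lt (by omega)),
    crossQuad_apply_add_add_two (by omega) r] at hmem
  refine (ContainsThreeCyclesOn.triangle (by omega) (by omega) (by omega) hmem).mono
    fun t ht => ?_
  simp only [Set.mem_insert_iff, Set.mem_singleton_iff] at ht ⊢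
  omega

theorem threeCyclesOn_C_gap_left_of_large (hn : 3 ≤ n) {y : ℕ} (hy : n + 1 ≤ y)
    (hym : y + n + 4 ≤ m) : ContainsThreeCyclesOn (C n m) {y, y + 2, y + n + 3} := by
  refine ((threeCyclesOn_C_gap_right (m := m) hn (x := m - y - n - 2) (by omega) (by omega)).reverse
    (by omega) ⟨by omega, by omega⟩ ⟨by omega, by omega⟩ ⟨by omega, by omega⟩).mono fun t ht => ?_
  simp only [Set.mem_insert_iff, Set.mem_singleton_iff] at ht ⊢
  omega

theorem threeCyclesOn_C_gap_left_of_small (hn : 3 ≤ n) {x : ℕ} (hx : 2 ≤ x)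
    (hxm : x + 2 * n + 5 ≤ m) : ContainsThreeCyclesOn (C n m) {x, x + 2, x + n + 3} := by
  have h₁ := (threeCyclesOn_C_gap_right (m := m) hn hx (by omega)).mono
    (s := {x + n + 1, x, x + n + 3}) fun t ht => by
      simp only [Set.mem_insert_iff, Set.mem_singleton_iff] at ht ⊢; omega
  have h₂ := (threeCyclesOn_C_gap_right (m := m) hn (x := x + 2) (by omega) (by omega)).mono
    (s := {x + n + 3, x + 2, x + n + 5}) fun t ht => by
      simp only [Set.mem_insert_iff, Set.mem_singleton_iff] at ht ⊢; omega
  have hnd : [x + n + 1, x, x + n + 3, x + 2, x + n + 5].Nodup := by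
    simp only [List.nodup_cons, List.mem_cons, List.not_mem_nil, List.nodup_nil, or_false,
      not_false_eq_true, and_true]
    omega
  refine (h₁.of_triangles h₂ hnd).mono fun t ht => ?_
  simp only [Set.mem_insert_iff, Set.mem_singleton_iff] at ht ⊢
  omega

theorem threeCyclesOn_C_gap_left (hn : 3 ≤ n) (hm : 3 * n + 5 ≤ m) {y : ℕ} (hy : 2 ≤ y)
    (hym : y + n + 4 ≤ m) : ContainsThreeCyclesOn (C n m) {y, y + 2, y + n + 3} := by
  by_cases hsmall : y + 2 * n + 5 ≤ m
  · exact threeCyclesOn_C_gap_left_of_small hn hy hsmall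
  · exact threeCyclesOn_C_gap_left_of_large hn (by omega) hym

theorem threeCyclesOn_C_consecutive_of_small (hn : 3 ≤ n) (hm : 3 * n + 5 ≤ m) {y : ℕ}
    (hy : 2 ≤ y) (hym : y + n + 6 ≤ m) : ContainsThreeCyclesOn (C n m) {y, y + 2, y + 4} := by
  have h₁ := (threeCyclesOn_C_gap_left hn hm hy (by omega)).mono
    (s := {y + n + 3, y, y + 2}) fun t ht => by
      simp only [Set.mem_insert_iff, Set.mem_singleton_iff] at ht ⊢; omega
  have h₂ := (threeCyclesOn_C_gap_left hn hm (y := y + 2) (by omega) (by omega)).mono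
    (s := {y + 2, y + 4, y + n + 5}) fun t ht => by
      simp only [Set.mem_insert_iff, Set.mem_singleton_iff] at ht ⊢; omega
  have hnd : [y + n + 3, y, y + 2, y + 4, y + n + 5].Nodup := by
    simp only [List.nodup_cons, List.mem_cons, List.not_mem_nil, List.nodup_nil, or_false,
      not_false_eq_true, and_true]
    omega
  exact h₁.of_triangles h₂ hnd

theorem threeCyclesOn_C_consecutive (hn : 3 ≤ n) (hm : 3 * n + 5 ≤ m) {y : ℕ} (hy : 2 ≤ y)
    (hym : y + 5 ≤ m) : ContainsThreeCyclesOn (C n m) {y, y + 2, y + 4} := by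
  by_cases hsmall : y + n + 6 ≤ m
  · exact threeCyclesOn_C_consecutive_of_small hn hm hy hsmall
  refine ((threeCyclesOn_C_consecutive_of_small hn hm (y := m - 3 - y) (by omega)
    (by omega)).reverse (by omega) ⟨by omega, by omega⟩ ⟨by omega, by omega⟩
    ⟨by omega, by omega⟩).mono fun t ht => ?_
  simp only [Set.mem_insert_iff, Set.mem_singleton_iff] at ht ⊢
  omega

theorem threeCyclesOn_C_one (hn : 3 ≤ n) (hm : 3 * n + 5 ≤ m) :
    ContainsThreeCyclesOn (C n m) {1, n + 2, n + n + 3} := by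
  have hπ : crossPerm n 1 ∈ C n m := crossPerm_mem_C le_rfl (by omega)
  have h := (threeCyclesOn_C_gap_left hn hm (y := n) (by omega) (by omega)).image
    fun g hg => mul_mem (mul_mem hπ hg) (inv_mem hπ)
  have e₁ : crossPerm n 1 n = 1 := by rw [crossPerm_apply, crossFun, if_pos (by omega)]; omega
  have e₂ : crossPerm n 1 (n + 2) = n + 2 := by rw [crossPerm_apply, crossFun, if_neg (by omega)]
  have e₃ : crossPerm n 1 (n + n + 3) = n + n + 3 := by
    rw [crossPerm_apply, crossFun, if_neg (by omega)]
  rwa [Set.image_insert_eq, Set.image_insert_eq, Set.image_singleton, e₁, e₂, e₃] at h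

theorem threeCyclesOn_C_parity (hn_odd : n % 2 = 1) (hn : 3 ≤ n) (hm : 3 * n + 5 ≤ m) (ρ : ℕ) :
    ContainsThreeCyclesOn (C n m) {t | 1 ≤ t ∧ t ≤ m ∧ t % 2 = ρ} := by
  have hinner : ContainsThreeCyclesOn (C n m) {t | 2 ≤ t ∧ t ≤ m - 1 ∧ t % 2 = ρ} :=
    ContainsThreeCyclesOn.of_consecutive fun y hy hym _ =>
      threeCyclesOn_C_consecutive hn hm hy (by omega) y (by simp) (y + 2) (by simp) (y + 4)
        (by simp) (by omega) (by omega) (by omega)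
  have hone := threeCyclesOn_C_one hn hm
  have hlow : ContainsThreeCyclesOn (C n m) {t | 1 ≤ t ∧ t ≤ m - 1 ∧ t % 2 = ρ} := by
    by_cases hρ : ρ = 1
    · refine (hinner.insert (a := n + 2) (b := n + n + 3) ⟨by omega, by omega, by omega⟩
        ⟨by omega, by omega, by omega⟩ (by omega)
        (hone (n + 2) (by simp) (n + n + 3) (by simp) 1 (by simp) (by omega) (by omega)
          (by omega))).mono fun t ht => ?_
      simp only [Set.mem_ofPred_eq, Set.mem_insert_iff] at ht ⊢
      omega
    · refine hinner.mono fun t ht => ?_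
      simp only [Set.mem_ofPred_eq] at ht ⊢
      omega
  by_cases hρ : m % 2 = ρ
  · have hlast := hone.reverse (by omega) ⟨le_rfl, by omega⟩ ⟨by omega, by omega⟩
      ⟨by omega, by omega⟩
    refine (hlow.insert (a := m + 1 - (n + 2)) (b := m + 1 - (n + n + 3))
      ⟨by omega, by omega, by omega⟩ ⟨by omega, by omega, by omega⟩ (by omega)
      (hlast _ (by simp) _ (by simp) (m + 1 - 1) (by simp) (by omega) (by omega) (by omega))).mono
      fun t ht => ?_
    simp only [Set.mem_ofPred_eq, Set.mem_insert_iff] at ht ⊢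
    omega
  · refine hlow.mono fun t ht => ?_
    simp only [Set.mem_ofPred_eq] at ht ⊢
    omega

end ThreeCyclesInC

theorem stmt9 (n : ℕ) (hn : n % 4 = 3) (hn3 : 3 ≤ n)
    (m : ℕ) (hm : 3 * n + 5 ≤ m)
    (a b c d : ℕ)
    (ha1 : 1 ≤ a) (ham : a ≤ m) (hb1 : 1 ≤ b) (hbm : b ≤ m)
    (hc1 : 1 ≤ c) (hcm : c ≤ m) (hd1 : 1 ≤ d) (hdm : d ≤ m)
    (hab : a ≠ b) (hac : a ≠ c) (had : a ≠ d)
    (hbc : b ≠ c) (hbd : b ≠ d) (hcd : c ≠ d)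
    (hpar : a % 2 = b % 2 ∧ b % 2 = c % 2 ∧ c % 2 = d % 2) :
    Equiv.swap a b * Equiv.swap c d ∈ C n m := by
  have hT := threeCyclesOn_C_parity (by omega) hn3 hm (a % 2)
  rw [swap_mul_swap_eq_cycle3_mul_cycle3 hab hac had hbc hbd hcd]
  exact mul_mem
    (hT a ⟨ha1, ham, rfl⟩ c ⟨hc1, hcm, by omega⟩ b ⟨hb1, hbm, by omega⟩ hac hab hbc.symm)
    (hT a ⟨ha1, ham, rfl⟩ c ⟨hc1, hcm, by omega⟩ d ⟨hd1, hdm, by omega⟩ hac had hcd)
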